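/- arXiv:2411.17078 — 3 statements merged into one kernel-verified Lean document; each statement's English description precedes it below -/
import Mathlib

section
/- Let n ≥ 3 and p be integers with 1 ≤ p ≤ n−1, let c̃ > 0 and 0 ≤ c < c̃ be real numbers, and let λ be a real number with λ ≥ n·c̃/(n−1). Then every real number a satisfying Q(a) ≤ 0 also satisfies a > (c̃ − c)/(n+1). (This is the analytic core of Lemma 3.2: any nonnegative eigenvalue a of the horizontal Laplacian on a λ-eigenfunction that satisfies a ≤ c̃ − c must satisfy Q(a) ≤ 0, and hence is bounded below by (c̃ − c)/(n+1).) -/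
set_option maxHeartbeats 1600000 in
/-- Analytic core of Lemma 3.2: for `n ≥ 3`, `1 ≤ p ≤ n-1`, `0 ≤ c < c̃`, and
`λ ≥ n·c̃/(n-1)`, any real `a` with `Q(a) ≤ 0` satisfies `a > (c̃ - c)/(n+1)`,
where `Q(x) = (p+1)x² - αx + β` with
`α = p·[(λ - c) + λ²/(n(λ - c̃))]` and `β = ((c̃ - c)/(λ - c̃))·(λ²·p/n)`. -/
theorem stmt_0 (n p : ℕ) (hn : 3 ≤ n) (hp1 : 1 ≤ p) (hp2 : p ≤ n - 1)
    (ct c : ℝ) (hct : 0 < ct) (hc0 : 0 ≤ c) (hcct : c < ct)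
    (lam : ℝ) (hlam : (n : ℝ) * ct / ((n : ℝ) - 1) ≤ lam)
    (a : ℝ)
    (hQ : ((p : ℝ) + 1) * a ^ 2
        - ((p : ℝ) * ((lam - c) + lam ^ 2 / ((n : ℝ) * (lam - ct)))) * a
        + ((ct - c) / (lam - ct)) * (lam ^ 2 * (p : ℝ) / (n : ℝ)) ≤ 0) :
    (ct - c) / ((n : ℝ) + 1) < a := by
  have hN : (3 : ℝ) ≤ (n : ℝ) := by exact_mod_cast hn
  have hP : (1 : ℝ) ≤ (p : ℝ) := by exact_mod_cast hp1
  have hpn : p + 1 ≤ n := by omega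
  have hPN : (p : ℝ) + 1 ≤ (n : ℝ) := by exact_mod_cast hpn
  have hN1 : (0 : ℝ) < (n : ℝ) - 1 := by linarith
  have hN0 : (0 : ℝ) < (n : ℝ) := by linarith
  have hd : 0 < ct - c := by linarith
  -- from hlam : n*ct/(n-1) ≤ lam we get n*ct ≤ lam*(n-1)
  have hlam' : (n : ℝ) * ct ≤ lam * ((n : ℝ) - 1) := by
    rw [div_le_iff₀ hN1] at hlam; linarith
  have hE : 0 < lam - ct := by nlinarith
  have hNE : 0 < (n : ℝ) * (lam - ct) := by positivity
  -- clear denominators in hQ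
  have hQ' : ((p : ℝ) + 1) * a ^ 2 * ((n : ℝ) * (lam - ct))
      - (p : ℝ) * ((lam - c) * ((n : ℝ) * (lam - ct)) + lam ^ 2) * a
      + (ct - c) * lam ^ 2 * (p : ℝ) ≤ 0 := by
    have h := mul_le_mul_of_nonneg_right hQ (le_of_lt hNE)
    have hne1 : (n : ℝ) ≠ 0 := ne_of_gt hN0
    have hne2 : lam - ct ≠ 0 := ne_of_gt hE
    calc ((p : ℝ) + 1) * a ^ 2 * ((n : ℝ) * (lam - ct))
        - (p : ℝ) * ((lam - c) * ((n : ℝ) * (lam - ct)) + lam ^ 2) * a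
        + (ct - c) * lam ^ 2 * (p : ℝ)
        = (((p : ℝ) + 1) * a ^ 2
        - ((p : ℝ) * ((lam - c) + lam ^ 2 / ((n : ℝ) * (lam - ct)))) * a
        + ((ct - c) / (lam - ct)) * (lam ^ 2 * (p : ℝ) / (n : ℝ))) * ((n : ℝ) * (lam - ct)) := by
          field_simp
      _ ≤ 0 := by linarith
  by_contra hcon
  push_neg at hcon
  have ha' : a * ((n : ℝ) + 1) ≤ ct - c := by
    rw [le_div_iff₀ (by linarith : (0:ℝ) < (n : ℝ) + 1)] at hcon
    linarith
  have hu : 0 ≤ (ct - c) - a * ((n : ℝ) + 1) := by linarith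
  -- R := NE * (α(N+1) - (P+1)(a(N+1)+d)), with αNE = P((lam-c)NE + lam²)
  have hR : 0 ≤ (p : ℝ) * ((lam - c) * ((n : ℝ) * (lam - ct)) + lam ^ 2) * ((n : ℝ) + 1)
      - ((p : ℝ) + 1) * (a * ((n : ℝ) + 1) + (ct - c)) * ((n : ℝ) * (lam - ct)) := by
    have h1 : (0:ℝ) ≤ (p : ℝ) * ((n : ℝ) - 1) - 2 := by nlinarith
    have h2 : ct - c < lam - c := by linarith
    nlinarith [mul_nonneg h1 (mul_nonneg (le_of_lt hd) hNE.le), sq_nonneg lam,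
      mul_pos hNE (sub_pos.mpr h2), mul_nonneg (mul_nonneg (by linarith : (0:ℝ) ≤ (p:ℝ)) hNE.le) (le_of_lt (sub_pos.mpr h2)),
      mul_nonneg (by linarith : (0:ℝ) ≤ (p:ℝ)) (sq_nonneg lam)]
  -- S := Q(t) * NE * (N+1)^2 > 0
  have hkey : 0 < lam * (c + ct) - c * ct := by nlinarith [mul_pos hE (show (0:ℝ) < c + ct by linarith), mul_pos hct hct]
  have hS : 0 < ((p : ℝ) + 1) * (ct - c) ^ 2 * ((n : ℝ) * (lam - ct))
      - (p : ℝ) * ((lam - c) * ((n : ℝ) * (lam - ct)) + lam ^ 2) * (ct - c) * ((n : ℝ) + 1)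
      + (ct - c) * lam ^ 2 * (p : ℝ) * ((n : ℝ) + 1) ^ 2 := by
    have h3 : 0 < (p : ℝ) * ((n : ℝ) + 1) * (n : ℝ) * (lam * (c + ct) - c * ct) := by positivity
    linarith [mul_pos hd h3, mul_pos (mul_pos (by linarith : (0:ℝ) < (p:ℝ)+1)
      (mul_pos hd hd)) hNE]
  -- identity: Qpoly*(N+1)^2 = u*R + S
  have hQ2 : (((p : ℝ) + 1) * a ^ 2 * ((n : ℝ) * (lam - ct))
      - (p : ℝ) * ((lam - c) * ((n : ℝ) * (lam - ct)) + lam ^ 2) * a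
      + (ct - c) * lam ^ 2 * (p : ℝ)) * ((n : ℝ) + 1) ^ 2 ≤ 0 :=
    mul_nonpos_of_nonpos_of_nonneg hQ' (by positivity)
  linarith [mul_nonneg hu hR, hS, hQ2]
end

section
/- Let n ≥ 3 and p be integers with 1 ≤ p ≤ n−1, let c̃ > 0 and 0 ≤ c < c̃ be real numbers, let (λ_k) and (a_k) be sequences of real numbers indexed by the positive integers such that for every k one has λ_k ≥ n·c̃/(n−1), a_k ≥ 0, and either a_k > c̃ − c or Q_{λ_k}(a_k) ≤ 0, where Q_λ(x) := (p+1)x² − p·[(λ − c) + λ²/(n(λ − c̃))]·x + ((c̃ − c)/(λ − c̃))·(λ²·p/n). Then for every real t ≥ 1 and every k, t⁻²·λ_k + (1 − t⁻²)·a_k ≥ (c̃ − c)/(n+1) + t⁻²·((n²+1)/(n²−1)·c̃ + c/(n+1)); consequently the infimum over k of t⁻²·λ_k + (1 − t⁻²)·a_k is bounded below by (c̃ − c)/(n+1) + t⁻²·((n²+1)/(n²−1)·c̃ + c/(n+1)). -/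
set_option maxHeartbeats 1000000


/-- The analytic skeleton of the lower bound in Theorem 1.1: if for every `k ≥ 1`
the eigenvalues satisfy `λ_k ≥ n·c̃/(n-1)`, `a_k ≥ 0`, and either `a_k > c̃ - c` or
`Q_{λ_k}(a_k) ≤ 0`, then for all `t ≥ 1` and all `k ≥ 1`,
`t⁻²·λ_k + (1-t⁻²)·a_k ≥ (c̃-c)/(n+1) + t⁻²·((n²+1)/(n²-1)·c̃ + c/(n+1))`, and the
infimum over `k` of these quantities is bounded below by the same constant. -/
theorem stmt_8 (n p : ℕ) (hn : 3 ≤ n) (hp1 : 1 ≤ p) (hp2 : p ≤ n - 1)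
    (ct c : ℝ) (hct : 0 < ct) (hc0 : 0 ≤ c) (hcct : c < ct)
    (lam a : ℕ+ → ℝ)
    (hlam : ∀ k : ℕ+, (n : ℝ) * ct / ((n : ℝ) - 1) ≤ lam k)
    (ha0 : ∀ k : ℕ+, 0 ≤ a k)
    (hQ : ∀ k : ℕ+, ct - c < a k ∨
        ((p : ℝ) + 1) * (a k) ^ 2
          - ((p : ℝ) * ((lam k - c) + (lam k) ^ 2 / ((n : ℝ) * (lam k - ct)))) * a k
          + ((ct - c) / (lam k - ct)) * ((lam k) ^ 2 * (p : ℝ) / (n : ℝ)) ≤ 0) :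
    ∀ t : ℝ, 1 ≤ t →
      (∀ k : ℕ+,
        (ct - c) / ((n : ℝ) + 1)
            + t⁻¹ ^ 2 * (((n : ℝ) ^ 2 + 1) / ((n : ℝ) ^ 2 - 1) * ct + c / ((n : ℝ) + 1))
          ≤ t⁻¹ ^ 2 * lam k + (1 - t⁻¹ ^ 2) * a k)
      ∧ (ct - c) / ((n : ℝ) + 1)
            + t⁻¹ ^ 2 * (((n : ℝ) ^ 2 + 1) / ((n : ℝ) ^ 2 - 1) * ct + c / ((n : ℝ) + 1))
          ≤ ⨅ k : ℕ+, (t⁻¹ ^ 2 * lam k + (1 - t⁻¹ ^ 2) * a k) := by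
  have hn3 : (3:ℝ) ≤ (n:ℝ) := by exact_mod_cast hn
  have hp1' : (1:ℝ) ≤ (p:ℝ) := by exact_mod_cast hp1
  have hn1 : (0:ℝ) < (n:ℝ) - 1 := by linarith
  have hnpos : (0:ℝ) < (n:ℝ) := by linarith
  have hn1' : (0:ℝ) < (n:ℝ) + 1 := by linarith
  have hn2 : (0:ℝ) < (n:ℝ)^2 - 1 := by nlinarith
  set A : ℝ := (ct - c) / ((n : ℝ) + 1) with hA
  set B : ℝ := ((n : ℝ) ^ 2 + 1) / ((n : ℝ) ^ 2 - 1) * ct + c / ((n : ℝ) + 1) with hB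
  have hAB : A + B = (n : ℝ) * ct / ((n : ℝ) - 1) := by
    rw [hA, hB]
    field_simp
    ring
  -- key: a k ≥ A for every k
  have hkey : ∀ k : ℕ+, A ≤ a k := by
    intro k
    rcases hQ k with h | h
    · have : A ≤ ct - c := by
        rw [hA]
        apply div_le_self (by linarith) (by linarith)
      linarith
    · set L := lam k with hL
      have hLct : ct < L := by
        have := hlam k
        have : (n : ℝ) * ct / ((n : ℝ) - 1) ≤ L := this
        have hgt : ct < (n : ℝ) * ct / ((n : ℝ) - 1) := by
          rw [lt_div_iff₀ hn1]
          nlinarith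
        linarith
      have hd : (0:ℝ) < L - ct := by linarith
      have hnd : (0:ℝ) < (n:ℝ) * (L - ct) := mul_pos hnpos hd
      by_contra hcon
      push_neg at hcon
      have hcon' : a k * ((n:ℝ) + 1) < ct - c := by
        rw [hA] at hcon
        exact (lt_div_iff₀ hn1').mp hcon
      -- multiply Q ≤ 0 by n(L - ct)
      have hQ' : ((p:ℝ)+1) * (a k)^2 * ((n:ℝ)*(L-ct))
          - (p:ℝ) * ((L - c) * ((n:ℝ)*(L-ct)) + L^2) * a k
          + (ct - c) * L^2 * (p:ℝ) ≤ 0 := by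
        have h2 := mul_le_mul_of_nonneg_right h (le_of_lt hnd)
        rw [zero_mul] at h2
        calc ((p:ℝ)+1) * (a k)^2 * ((n:ℝ)*(L-ct))
              - (p:ℝ) * ((L - c) * ((n:ℝ)*(L-ct)) + L^2) * a k
              + (ct - c) * L^2 * (p:ℝ)
            = (((p : ℝ) + 1) * (a k) ^ 2
              - ((p : ℝ) * ((L - c) + L ^ 2 / ((n : ℝ) * (L - ct)))) * a k
              + ((ct - c) / (L - ct)) * (L ^ 2 * (p : ℝ) / (n : ℝ))) * ((n:ℝ)*(L-ct)) := by
              field_simp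
          _ ≤ 0 := h2
      have haL : 0 ≤ a k := ha0 k
      have hLpos : (0:ℝ) < L := by linarith
      -- Q' ≥ nd(p+1)a² + p[L²(ct−c−a(n+1)) + a·n·(L² − (L−ct)(L−c))] > 0
      nlinarith [mul_nonneg (mul_nonneg haL hnd.le) (sq_nonneg (a k)),
        mul_pos (mul_pos (sub_pos.mpr hcon') (mul_pos hLpos hLpos)) (by linarith : (0:ℝ) < (p:ℝ)),
        mul_nonneg (mul_nonneg (mul_nonneg haL hnpos.le) (by nlinarith : (0:ℝ) ≤ L^2 - (L - ct)*(L - c))) (by linarith : (0:ℝ) ≤ (p:ℝ)),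
        mul_nonneg (mul_nonneg hnd.le (by linarith : (0:ℝ) ≤ (p:ℝ)+1)) (sq_nonneg (a k))]
  intro t ht
  have hs0 : 0 < t⁻¹ ^ 2 := by positivity
  have hs1 : t⁻¹ ^ 2 ≤ 1 := by
    have h1 : t⁻¹ ≤ 1 := by
      rw [inv_le_one_iff₀]; right; linarith
    have h0 : (0:ℝ) ≤ t⁻¹ := by positivity
    nlinarith
  have hmain : ∀ k : ℕ+,
      A + t⁻¹ ^ 2 * B ≤ t⁻¹ ^ 2 * lam k + (1 - t⁻¹ ^ 2) * a k := by
    intro k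
    have h1 : A + B ≤ lam k := by rw [hAB]; exact hlam k
    have h2 : A ≤ a k := hkey k
    nlinarith [mul_le_mul_of_nonneg_left h1 hs0.le,
      mul_le_mul_of_nonneg_left h2 (by linarith : (0:ℝ) ≤ 1 - t⁻¹ ^ 2)]
  exact ⟨hmain, le_ciInf hmain⟩
end

section
/- Let n ≥ 3 and p be integers with 1 ≤ p ≤ n−1, let c̃ > 0 and 0 ≤ c < c̃ be real numbers, and let A > 0. Define Γ := ((n²+1)/(n+1))·(c̃ − c) + p·c, L(t) := (c̃ − c)/(n+1) + t⁻²·((n²+1)/(n²−1)·c̃ + c/(n+1)), and S(t) := −t²·A² + A² − (n−p)·c + n·c̃ + t⁻²·(n−p)·c. Then for every real t with t ≥ 1 and t ≥ √Γ/A, and every real λ with λ ≥ L(t), one has (n−1)·λ ≥ S(t), i.e. λ ≥ S(t)/(n−1). -/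
/-!
Write `S(t) = (n-1)·L(t) + (1 - t⁻²)·Γ - (t² - 1)·A²`, an identity of rational functions in `n`
and `t`. For `t ≥ 1` the last two terms combine to `(t² - 1)·(Γ/t² - A²)`, which is `≤ 0` because
`√Γ ≤ t·A` forces `Γ ≤ t²·A²`. Hence `S(t) ≤ (n-1)·L(t) ≤ (n-1)·λ`.
-/

namespace CanonicalVariation

noncomputable def gamma (n p ct c : ℝ) : ℝ :=
  (n ^ 2 + 1) / (n + 1) * (ct - c) + p * c

noncomputable def eigenvalueBound (n ct c t : ℝ) : ℝ :=
  (ct - c) / (n + 1) + t⁻¹ ^ 2 * ((n ^ 2 + 1) / (n ^ 2 - 1) * ct + c / (n + 1))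

noncomputable def scalarCurvature (n p ct c A t : ℝ) : ℝ :=
  -(t ^ 2) * A ^ 2 + A ^ 2 - (n - p) * c + n * ct + t⁻¹ ^ 2 * (n - p) * c

theorem scalarCurvature_eq {n : ℝ} (hn : n ^ 2 - 1 ≠ 0) (p ct c A t : ℝ) :
    scalarCurvature n p ct c A t
      = (n - 1) * eigenvalueBound n ct c t + (1 - t⁻¹ ^ 2) * gamma n p ct c
        - (t ^ 2 - 1) * A ^ 2 := by
  have hn1 : n + 1 ≠ 0 := fun h => hn (by linear_combination (n - 1) * h)
  unfold scalarCurvature eigenvalueBound gamma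
  field_simp
  ring

theorem one_sub_inv_sq_mul_le {t Γ B : ℝ} (ht : 1 ≤ t) (hΓ : Γ ≤ (t * B) ^ 2) :
    (1 - t⁻¹ ^ 2) * Γ ≤ (t ^ 2 - 1) * B ^ 2 := by
  have ht0 : t ≠ 0 := by positivity
  have hfactor : (1 - t⁻¹ ^ 2) * Γ = (t ^ 2 - 1) * (Γ / t ^ 2) := by
    field_simp
  have hquot : Γ / t ^ 2 ≤ B ^ 2 := by
    rw [div_le_iff₀ (by positivity)]
    linarith
  rw [hfactor]
  exact mul_le_mul_of_nonneg_left hquot (by nlinarith)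

theorem scalarCurvature_le {n : ℝ} (hn : n ^ 2 - 1 ≠ 0) (p ct c : ℝ) {A t : ℝ} (ht : 1 ≤ t)
    (hΓ : gamma n p ct c ≤ (t * A) ^ 2) :
    scalarCurvature n p ct c A t ≤ (n - 1) * eigenvalueBound n ct c t := by
  rw [scalarCurvature_eq hn]
  linarith [one_sub_inv_sq_mul_le ht hΓ]

end CanonicalVariation

open CanonicalVariation in
theorem stmt_9_general (n p : ℕ) (hn : 3 ≤ n)
    (ct c A : ℝ) (hA : 0 < A)
    (t : ℝ) (ht1 : 1 ≤ t)
    (ht2 : Real.sqrt (((n : ℝ) ^ 2 + 1) / ((n : ℝ) + 1) * (ct - c) + (p : ℝ) * c) / A ≤ t)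
    (lam : ℝ)
    (hlam : (ct - c) / ((n : ℝ) + 1)
        + t⁻¹ ^ 2 * (((n : ℝ) ^ 2 + 1) / ((n : ℝ) ^ 2 - 1) * ct + c / ((n : ℝ) + 1)) ≤ lam) :
    (-(t ^ 2) * A ^ 2 + A ^ 2 - ((n : ℝ) - (p : ℝ)) * c + (n : ℝ) * ct
        + t⁻¹ ^ 2 * ((n : ℝ) - (p : ℝ)) * c
      ≤ ((n : ℝ) - 1) * lam)
    ∧ (-(t ^ 2) * A ^ 2 + A ^ 2 - ((n : ℝ) - (p : ℝ)) * c + (n : ℝ) * ct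
        + t⁻¹ ^ 2 * ((n : ℝ) - (p : ℝ)) * c) / ((n : ℝ) - 1)
      ≤ lam := by
  have hn3 : (3 : ℝ) ≤ n := by exact_mod_cast hn
  have hΓ : gamma n p ct c ≤ (t * A) ^ 2 :=
    (Real.sqrt_le_iff.mp ((div_le_iff₀ hA).mp ht2)).2
  have hS : scalarCurvature n p ct c A t ≤ (n - 1) * lam :=
    (scalarCurvature_le (by nlinarith) p ct c ht1 hΓ).trans
      (mul_le_mul_of_nonneg_left hlam (by linarith))
  exact ⟨hS, (div_le_iff₀ (by linarith)).mpr (by rwa [mul_comm] at hS)⟩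

/-- The analytic skeleton of Theorem 4.1 (stability): with
`Γ = ((n²+1)/(n+1))·(c̃-c) + p·c`,
`L(t) = (c̃-c)/(n+1) + t⁻²·((n²+1)/(n²-1)·c̃ + c/(n+1))` and
`S(t) = -t²·A² + A² - (n-p)·c + n·c̃ + t⁻²·(n-p)·c`, for every
`t ≥ max{1, √Γ/A}` and every `λ ≥ L(t)` one has `(n-1)·λ ≥ S(t)`,
i.e. `λ ≥ S(t)/(n-1)`. -/
theorem stmt_9 (n p : ℕ) (hn : 3 ≤ n) (hp1 : 1 ≤ p) (hp2 : p ≤ n - 1)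
    (ct c A : ℝ) (hct : 0 < ct) (hc0 : 0 ≤ c) (hcct : c < ct) (hA : 0 < A)
    (t : ℝ) (ht1 : 1 ≤ t)
    (ht2 : Real.sqrt (((n : ℝ) ^ 2 + 1) / ((n : ℝ) + 1) * (ct - c) + (p : ℝ) * c) / A ≤ t)
    (lam : ℝ)
    (hlam : (ct - c) / ((n : ℝ) + 1)
        + t⁻¹ ^ 2 * (((n : ℝ) ^ 2 + 1) / ((n : ℝ) ^ 2 - 1) * ct + c / ((n : ℝ) + 1)) ≤ lam) :
    (-(t ^ 2) * A ^ 2 + A ^ 2 - ((n : ℝ) - (p : ℝ)) * c + (n : ℝ) * ct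
        + t⁻¹ ^ 2 * ((n : ℝ) - (p : ℝ)) * c
      ≤ ((n : ℝ) - 1) * lam)
    ∧ (-(t ^ 2) * A ^ 2 + A ^ 2 - ((n : ℝ) - (p : ℝ)) * c + (n : ℝ) * ct
        + t⁻¹ ^ 2 * ((n : ℝ) - (p : ℝ)) * c) / ((n : ℝ) - 1)
      ≤ lam :=
  stmt_9_general n p hn ct c A hA t ht1 ht2 lam hlam
end
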